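/- arXiv:1503.03687 — 4 statements merged into one kernel-verified Lean document; each statement's English description precedes it below -/
import Mathlib

section
/- For any positive integer k and non-negative integers d_1,...,d_k, the polynomial C̃^{d_1,...,d_k}(N) := Σ_{a_1+...+a_k = N, a_i ≥ 0} a_1^{d_1}···a_k^{d_k} has degree exactly k - 1 + Σd_i, and its leading coefficient equals (∏_{i=1}^k d_i!) / (k - 1 + Σ_{i=1}^k d_i)!. -/
/-!
By Newton's forward-difference formula a polynomial `P` satisfies
`P(N) = ∑ₖ Δᵏ P(0) · C(N, k)`, and `Δᵏ P(0) = lc(P) · k!` for `k = deg P`. Together with the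
identity `∑_{i+j=N} C(i, a) C(j, b) = C(N+1, a+b+1)` this shows that the antidiagonal
convolution `N ↦ ∑_{i+j=N} p(i) q(j)` of two nonzero polynomials is again a polynomial, of
degree `deg p + deg q + 1` and leading coefficient
`lc p · lc q · (deg p)! (deg q)! / (deg p + deg q + 1)!`.
The sum `C̃^{d₀,…,d_k}` is the convolution of `N ↦ N^{d₀}` with `C̃^{d₁,…,d_k}`, so the result
follows by induction on the number of parts.
-/

open Finset Polynomial fwdDiff
open scoped Nat

section BinomialPoly

variable {K : Type*} [Field K]

variable (K) in
noncomputable def binomialPoly (n : ℕ) : K[X] := C (n ! : K)⁻¹ * descPochhammer K n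

lemma leadingCoeff_binomialPoly (n : ℕ) : (binomialPoly K n).leadingCoeff = (n ! : K)⁻¹ := by
  rw [binomialPoly, leadingCoeff_mul, leadingCoeff_C, (monic_descPochhammer K n).leadingCoeff,
    mul_one]

variable [CharZero K]

lemma eval_natCast_binomialPoly (n N : ℕ) : (binomialPoly K n).eval (N : K) = N.choose n := by
  rw [binomialPoly, eval_mul, eval_C, Nat.cast_choose_eq_descPochhammer_div, inv_mul_eq_div]

lemma natDegree_binomialPoly (n : ℕ) : (binomialPoly K n).natDegree = n := by
  rw [binomialPoly, natDegree_C_mul (inv_ne_zero (Nat.cast_ne_zero.2 n.factorial_ne_zero)),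
    descPochhammer_natDegree]

lemma eval_natCast_binomialPoly_comp_X_add_one (n N : ℕ) :
    ((binomialPoly K n).comp (X + 1)).eval (N : K) = (N + 1).choose n := by
  rw [eval_comp, eval_add, eval_X, eval_one, ← Nat.cast_succ, eval_natCast_binomialPoly]

lemma natDegree_binomialPoly_comp_X_add_one (n : ℕ) :
    ((binomialPoly K n).comp (X + 1)).natDegree = n := by
  have hX : (X + 1 : K[X]).natDegree = 1 := natDegree_X_add_C 1
  rw [natDegree_comp, natDegree_binomialPoly, hX, mul_one]

lemma coeff_binomialPoly_comp_X_add_one_self (n : ℕ) :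
    ((binomialPoly K n).comp (X + 1)).coeff n = (n ! : K)⁻¹ := by
  have hX : (X + 1 : K[X]).natDegree = 1 := natDegree_X_add_C 1
  have h := leadingCoeff_comp (p := binomialPoly K n) (q := X + 1) (by rw [hX]; exact one_ne_zero)
  rw [leadingCoeff, natDegree_binomialPoly_comp_X_add_one] at h
  have hlc : (X + 1 : K[X]).leadingCoeff = 1 := leadingCoeff_X_add_C 1
  rw [h, hlc, one_pow, mul_one, leadingCoeff_binomialPoly]

end BinomialPoly

lemma sum_antidiagonal_choose_mul_choose (a b N : ℕ) :
    ∑ ij ∈ antidiagonal N, ij.1.choose a * ij.2.choose b = (N + 1).choose (a + b + 1) := by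
  induction N generalizing a with
  | zero => rcases a with _ | a <;> rcases b with _ | b <;> simp [Nat.choose_eq_zero_of_lt]
  | succ N ih =>
    rw [Nat.sum_antidiagonal_succ]
    rcases a with _ | a
    · have h0 := ih 0
      simp only [Nat.choose_zero_right, one_mul, zero_add] at h0 ⊢
      rw [h0, Nat.choose_succ_succ' (N + 1), add_comm]
    · rw [Nat.choose_succ_succ (N + 1), ← ih (a + 1), show a + 1 + b = a + b + 1 by omega, ← ih a]
      simp only [Nat.choose_zero_succ, zero_mul, zero_add, Nat.choose_succ_succ, add_mul,
        sum_add_distrib]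

section Newton

variable {R : Type*} [CommRing R]

def newtonCoeff (P : R[X]) (k : ℕ) : R := Δ_[1] ^[k] P.eval 0

theorem eval_natCast_eq_sum_newtonCoeff_mul_choose (P : R[X]) (N : ℕ) :
    P.eval (N : R) = ∑ k ∈ range (P.natDegree + 1), newtonCoeff P k * N.choose k := by
  calc P.eval (N : R) = ∑ k ∈ range (N + 1), N.choose k • newtonCoeff P k := by
        simpa [newtonCoeff] using shift_eq_sum_fwdDiff_iter 1 P.eval N 0
    _ = ∑ k ∈ range (N + P.natDegree + 1), N.choose k • newtonCoeff P k := by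
        refine sum_subset (range_mono (by omega)) fun k _ hk => ?_
        rw [Nat.choose_eq_zero_of_lt (by simpa using hk), zero_smul]
    _ = ∑ k ∈ range (P.natDegree + 1), N.choose k • newtonCoeff P k := by
        refine (sum_subset (range_mono (by omega)) fun k _ hk => ?_).symm
        rw [newtonCoeff, P.fwdDiff_iter_eq_zero_of_degree_lt (by simpa using hk), Pi.zero_apply,
          smul_zero]
    _ = _ := sum_congr rfl fun k _ => by rw [nsmul_eq_mul, mul_comm]

theorem newtonCoeff_natDegree (P : R[X]) :
    newtonCoeff P P.natDegree = P.leadingCoeff * P.natDegree ! := by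
  simp [newtonCoeff, P.fwdDiff_iter_degree_eq_factorial]

end Newton

section Convolution

variable {K : Type*} [Field K] [CharZero K]

noncomputable def convPoly (p q : K[X]) : K[X] :=
  ∑ ab ∈ range (p.natDegree + 1) ×ˢ range (q.natDegree + 1),
    C (newtonCoeff p ab.1 * newtonCoeff q ab.2) * (binomialPoly K (ab.1 + ab.2 + 1)).comp (X + 1)

theorem eval_natCast_convPoly (p q : K[X]) (N : ℕ) :
    (convPoly p q).eval (N : K) =
      ∑ ij ∈ antidiagonal N, p.eval (ij.1 : K) * q.eval (ij.2 : K) := by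
  simp only [convPoly, eval_finsetSum, eval_mul, eval_C, eval_natCast_binomialPoly_comp_X_add_one,
    ← sum_antidiagonal_choose_mul_choose, Nat.cast_sum, Nat.cast_mul, mul_sum]
  rw [sum_comm]
  refine sum_congr rfl fun ij _ => ?_
  rw [eval_natCast_eq_sum_newtonCoeff_mul_choose p, eval_natCast_eq_sum_newtonCoeff_mul_choose q,
    sum_mul_sum, sum_product]
  exact sum_congr rfl fun a _ => sum_congr rfl fun b _ => by ring

theorem natDegree_convPoly_le (p q : K[X]) :
    (convPoly p q).natDegree ≤ p.natDegree + q.natDegree + 1 := by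
  refine natDegree_sum_le_of_forall_le _ _ fun ab hab => (natDegree_C_mul_le _ _).trans ?_
  rw [natDegree_binomialPoly_comp_X_add_one]
  simp only [mem_product, mem_range] at hab
  omega

theorem coeff_convPoly (p q : K[X]) :
    (convPoly p q).coeff (p.natDegree + q.natDegree + 1) =
      p.leadingCoeff * q.leadingCoeff * p.natDegree ! * q.natDegree ! /
        (p.natDegree + q.natDegree + 1)! := by
  rw [convPoly, finsetSum_coeff, sum_eq_single (p.natDegree, q.natDegree)]
  · rw [coeff_C_mul, coeff_binomialPoly_comp_X_add_one_self, newtonCoeff_natDegree,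
      newtonCoeff_natDegree, div_eq_mul_inv]
    ring
  · rintro ⟨a, b⟩ hab hne
    simp only [mem_product, mem_range, ne_eq, Prod.mk.injEq] at hab hne
    rw [coeff_C_mul, coeff_eq_zero_of_natDegree_lt (by
      rw [natDegree_binomialPoly_comp_X_add_one]; omega), mul_zero]
  · simp

variable {p q : K[X]}

theorem coeff_convPoly_ne_zero (hp : p ≠ 0) (hq : q ≠ 0) :
    (convPoly p q).coeff (p.natDegree + q.natDegree + 1) ≠ 0 := by
  rw [coeff_convPoly]
  have := leadingCoeff_ne_zero.2 hp
  have := leadingCoeff_ne_zero.2 hq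
  simp [*, Nat.factorial_ne_zero]

theorem natDegree_convPoly (hp : p ≠ 0) (hq : q ≠ 0) :
    (convPoly p q).natDegree = p.natDegree + q.natDegree + 1 :=
  natDegree_eq_of_le_of_coeff_ne_zero (natDegree_convPoly_le p q) (coeff_convPoly_ne_zero hp hq)

theorem leadingCoeff_convPoly (hp : p ≠ 0) (hq : q ≠ 0) :
    (convPoly p q).leadingCoeff = p.leadingCoeff * q.leadingCoeff * p.natDegree ! *
      q.natDegree ! / (p.natDegree + q.natDegree + 1)! := by
  rw [leadingCoeff, natDegree_convPoly hp hq, coeff_convPoly]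

end Convolution

lemma sum_antidiagonalTuple_succ {M : Type*} [AddCommMonoid M] (k N : ℕ)
    (f : (Fin (k + 1) → ℕ) → M) :
    ∑ a ∈ Nat.antidiagonalTuple (k + 1) N, f a =
      ∑ ij ∈ antidiagonal N, ∑ b ∈ Nat.antidiagonalTuple k ij.2, f (Fin.cons ij.1 b) := by
  -- `antidiagonalTuple (k + 1)` is defined by exactly this recursion on lists
  change (List.Nat.antidiagonalTuple (k + 1) N |>.map f).sum =
    (List.Nat.antidiagonal N |>.map fun ij =>
      ((List.Nat.antidiagonalTuple k ij.2).map fun b => f (Fin.cons ij.1 b)).sum).sum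
  simp only [List.Nat.antidiagonalTuple, List.flatMap, List.map_flatten, List.sum_flatten,
    List.map_map, Function.comp_def]

theorem exists_poly_sum_antidiagonalTuple_prod_pow {K : Type*} [Field K] [CharZero K] (k : ℕ)
    (d : Fin (k + 1) → ℕ) :
    ∃ p : K[X],
      (∀ N : ℕ, p.eval (N : K) = ∑ a ∈ Nat.antidiagonalTuple (k + 1) N, ∏ i, (a i : K) ^ d i) ∧
      p.natDegree = k + ∑ i, d i ∧
      p.leadingCoeff = (∏ i, ((d i)! : K)) / (k + ∑ i, d i)! := by
  induction k with
  | zero =>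
    refine ⟨X ^ d 0, fun N => by simp, by simp, ?_⟩
    simp [Nat.factorial_ne_zero]
  | succ k ih =>
    obtain ⟨q, hq_eval, hq_deg, hq_lc⟩ := ih (Fin.tail d)
    have hq : q ≠ 0 :=
      leadingCoeff_ne_zero.1 (by simp [hq_lc, prod_ne_zero_iff, Nat.factorial_ne_zero])
    have hX : (X ^ d 0 : K[X]) ≠ 0 := pow_ne_zero _ X_ne_zero
    have h_deg : d 0 + (k + ∑ i, Fin.tail d i) + 1 = k + 1 + ∑ i, d i := by
      rw [Fin.sum_univ_succ d]; simp only [Fin.tail]; omega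
    refine ⟨convPoly (X ^ d 0) q, fun N => ?_, ?_, ?_⟩
    · rw [eval_natCast_convPoly, sum_antidiagonalTuple_succ]
      refine sum_congr rfl fun ij _ => ?_
      simp [hq_eval, mul_sum, Fin.prod_univ_succ, Fin.tail]
    · rw [natDegree_convPoly hX hq, natDegree_X_pow, hq_deg, h_deg]
    · rw [leadingCoeff_convPoly hX hq, natDegree_X_pow, hq_deg, h_deg, hq_lc, leadingCoeff_X_pow,
        Fin.prod_univ_succ (fun i => ((d i)! : K))]
      have : ((k + ∑ i, Fin.tail d i)! : K) ≠ 0 := Nat.cast_ne_zero.2 (Nat.factorial_ne_zero _)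
      field_simp
      simp only [Fin.tail]
      ring

/-- The polynomial `C̃^{d₁,...,d_k}(N) = ∑_{a₁+...+a_k=N} ∏ aᵢ^{dᵢ}` has degree
exactly `k - 1 + ∑ dᵢ` and leading coefficient `(∏ dᵢ!)/(k - 1 + ∑ dᵢ)!`. -/
theorem tildeC_degree_and_leadingCoeff (k : ℕ) (hk : 1 ≤ k) (d : Fin k → ℕ) :
    ∃ p : Polynomial ℚ,
      (∀ N : ℕ, p.eval (N : ℚ) =
          ∑ a ∈ Finset.Nat.antidiagonalTuple k N, ∏ i : Fin k, (a i : ℚ) ^ d i) ∧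
      p.natDegree = k - 1 + ∑ i, d i ∧
      p.leadingCoeff =
        ((∏ i, (d i).factorial : ℕ) : ℚ) / (((k - 1 + ∑ i, d i).factorial : ℕ) : ℚ) := by
  obtain ⟨k, rfl⟩ := Nat.exists_eq_add_of_le' hk
  obtain ⟨p, h_eval, h_deg, h_lc⟩ := exists_poly_sum_antidiagonalTuple_prod_pow (K := ℚ) k d
  exact ⟨p, h_eval, by simpa using h_deg, by simpa using h_lc⟩
end

section
/- For any positive integers d_1,...,d_k, the product of formal power series Li_{-d_1}(z)···Li_{-d_k}(z) can be written as Σ_{j=1}^{k-1+Σd_i} c_j Li_{-j}(z) for unique rational numbers c_j, and c_j = 0 unless j ≡ k - 1 + Σd_i (mod 2). -/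
/-!
The `N`-th coefficient of `Li_{-d₁}(z) ⋯ Li_{-d_k}(z)` is
`C̃(N) = ∑_{a₁+⋯+a_k=N} a₁^{d₁} ⋯ a_k^{d_k}`. Adding one factor at a time, `C̃` is obtained by
repeated convolutions `n ↦ ∑_{a ≤ n} P(a) (n - a)^q`; expanding `(n - a)^q` binomially and summing
with Faulhaber's polynomials `F_m(N) = ∑_{a < N} a^m` shows that `C̃` is a polynomial of degree
`≤ k - 1 + ∑ dᵢ` with `C̃(0) = 0`, so its coefficients are the `c_j`. They are unique because a
polynomial vanishing on `ℕ` is zero.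

For the parity, the reflection `B_n(1 - x) = (-1)^n B_n(x)` of the Bernoulli polynomials gives
`F_m(1 - x) = (-1)^{m+1} F_m(x)` for `m ≥ 1`. Hence each convolution step turns a polynomial `P` of
parity `e` (`P(-x) = (-1)^e P(x)`) into one of parity `e + q + 1`, and so
`C̃(-x) = (-1)^{k-1+∑dᵢ} C̃(x)`.
-/

open Finset

namespace Polynomial

theorem eq_of_eval_natCast_eq {R : Type*} [CommRing R] [IsDomain R] [CharZero R] {P Q : R[X]}
    (h : ∀ n : ℕ, P.eval (n : R) = Q.eval (n : R)) : P = Q := by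
  apply eq_of_infinite_eval_eq
  apply Set.Infinite.mono (s := Set.range fun n : ℕ => (n : R))
  · rintro _ ⟨n, rfl⟩
    exact h n
  · exact Set.infinite_range_of_injective Nat.cast_injective

theorem coeff_sum_smul_X_pow {R : Type*} [Semiring R] {s : Finset ℕ} {c : ℕ → R}
    (hc : ∀ j ∉ s, c j = 0) : (∑ j ∈ s, c j • (X : R[X]) ^ j).coeff = c := by
  funext i
  simp only [finsetSum_coeff, coeff_smul, coeff_X_pow, smul_eq_mul, mul_ite, mul_one, mul_zero,
    sum_ite_eq]
  split_ifs with hi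
  · rfl
  · exact (hc i hi).symm

noncomputable def evalSeries {R : Type*} [CommSemiring R] : R[X] →ₗ[R] PowerSeries R where
  toFun P := PowerSeries.mk fun n => P.eval (n : R)
  map_add' P Q := by ext; simp
  map_smul' c P := by ext; simp

theorem evalSeries_X_pow {R : Type*} [CommSemiring R] (j : ℕ) :
    evalSeries (X ^ j : R[X]) = PowerSeries.mk fun n => (n : R) ^ j := by
  simp [evalSeries]

theorem evalSeries_injective {R : Type*} [CommRing R] [IsDomain R] [CharZero R] :
    Function.Injective (evalSeries : R[X] →ₗ[R] PowerSeries R) := fun P Q h =>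
  eq_of_eval_natCast_eq fun n => by simpa [evalSeries] using congrArg (PowerSeries.coeff n) h

def HasParity {R : Type*} [Semiring R] (P : R[X]) (e : ℕ) : Prop :=
  ∀ m, P.coeff m ≠ 0 → m % 2 = e % 2

theorem HasParity.neg_one_pow_eq {R : Type*} [Ring R] {P : R[X]} {e m : ℕ} (hP : HasParity P e)
    (hm : P.coeff m ≠ 0) : (-1 : R) ^ m = (-1) ^ e := by
  rw [neg_one_pow_eq_pow_mod_two, hP m hm, ← neg_one_pow_eq_pow_mod_two]

theorem HasParity.mul_X_pow {R : Type*} [Semiring R] {P : R[X]} {e : ℕ} (hP : HasParity P e)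
    (k : ℕ) : HasParity (P * X ^ k) (e + k) := by
  intro m hm
  rw [coeff_mul_X_pow'] at hm
  split_ifs at hm with hk
  · have := hP _ hm
    omega
  · exact absurd rfl hm

theorem hasParity_of_eval_neg {R : Type*} [CommRing R] [IsDomain R] [CharZero R] {P : R[X]}
    {e : ℕ} (h : ∀ n : ℕ, P.eval (-(n : R)) = (-1) ^ e * P.eval (n : R)) : HasParity P e := by
  have hcomp : P.comp (-X) = (-1 : R) ^ e • P := eq_of_eval_natCast_eq fun n => by simp [h]
  intro m hm
  have hcoeff := congrArg (coeff · m) hcomp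
  rw [← neg_one_mul (X : R[X]), ← C_1, ← C_neg] at hcoeff
  simp only [comp_C_mul_X_coeff, coeff_smul, smul_eq_mul] at hcoeff
  have hpow := mul_left_cancel₀ hm (hcoeff.trans (mul_comm _ _))
  rw [neg_one_pow_eq_pow_mod_two, neg_one_pow_eq_pow_mod_two (n := e)] at hpow
  rcases Nat.mod_two_eq_zero_or_one m with hm2 | hm2 <;>
    rcases Nat.mod_two_eq_zero_or_one e with he2 | he2 <;>
    rw [hm2, he2] at hpow ⊢ <;> norm_num at hpow

noncomputable def faulhaber (m : ℕ) : ℚ[X] :=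
  C ((m + 1 : ℚ)⁻¹) * (bernoulli (m + 1) - C (_root_.bernoulli (m + 1)))

theorem faulhaber_eval_natCast (m N : ℕ) :
    (faulhaber m).eval (N : ℚ) = ∑ a ∈ range N, (a : ℚ) ^ m := by
  rw [faulhaber, eval_mul, eval_sub, eval_C, eval_C, bernoulli_succ_eval, add_sub_cancel_left,
    ← mul_assoc, inv_mul_cancel₀ (by norm_cast), one_mul]

theorem faulhaber_eval_one_sub {m : ℕ} (hm : m ≠ 0) (x : ℚ) :
    (faulhaber m).eval (1 - x) = (-1) ^ (m + 1) * (faulhaber m).eval x := by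
  have hb : (-1) ^ (m + 1) * _root_.bernoulli (m + 1) = _root_.bernoulli (m + 1) := by
    rcases Nat.even_or_odd (m + 1) with h | h
    · rw [h.neg_one_pow, one_mul]
    · rw [bernoulli_eq_zero_of_odd h (by omega), mul_zero]
  simp only [faulhaber, eval_mul, eval_sub, eval_C, bernoulli_eval_one_sub]
  linear_combination (m + 1 : ℚ)⁻¹ * hb

theorem natDegree_faulhaber_le (m : ℕ) : (faulhaber m).natDegree ≤ m + 1 := by
  refine (natDegree_C_mul_le _ _).trans ?_
  rw [natDegree_sub_C, natDegree_le_iff_coeff_eq_zero]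
  intro i hi
  rw [coeff_bernoulli, if_neg (by omega)]

noncomputable def indefSum (h : ℚ[X]) : ℚ[X] :=
  h.sum fun m c => C c * faulhaber m

theorem indefSum_eval_natCast (h : ℚ[X]) (N : ℕ) :
    (indefSum h).eval (N : ℚ) = ∑ a ∈ range N, h.eval (a : ℚ) := by
  simp only [indefSum, Polynomial.sum, eval_finsetSum, eval_mul, eval_C, faulhaber_eval_natCast,
    mul_sum]
  rw [sum_comm]
  refine sum_congr rfl fun a _ => ?_
  rw [eval_eq_sum, Polynomial.sum]

theorem indefSum_eval_one_sub {h : ℚ[X]} {e : ℕ} (h0 : h.coeff 0 = 0) (hh : HasParity h e)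
    (x : ℚ) : (indefSum h).eval (1 - x) = (-1) ^ (e + 1) * (indefSum h).eval x := by
  simp only [indefSum, Polynomial.sum, eval_finsetSum, eval_mul, eval_C, mul_sum]
  refine sum_congr rfl fun m hm => ?_
  have hc := mem_support_iff.mp hm
  have hm0 : m ≠ 0 := by rintro rfl; exact hc h0
  rw [faulhaber_eval_one_sub hm0, pow_succ, pow_succ, hh.neg_one_pow_eq hc]
  ring

theorem natDegree_indefSum_le (h : ℚ[X]) : (indefSum h).natDegree ≤ h.natDegree + 1 :=
  natDegree_sum_le_of_forall_le _ _ fun m hm =>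
    (natDegree_C_mul_le _ _).trans <|
      (natDegree_faulhaber_le m).trans (by have := le_natDegree_of_mem_supp m hm; omega)

/-- `convPow P q` interpolates `n ↦ ∑_{a ≤ n} P(a) (n - a)^q`: expand `(n - a)^q` binomially
and sum each term with `indefSum`. -/
noncomputable def convPow (P : ℚ[X]) (q : ℕ) : ℚ[X] :=
  ∑ j ∈ range (q + 1), C (q.choose j * (-1) ^ (q - j) : ℚ) * X ^ j * indefSum (P * X ^ (q - j))

theorem convPow_eval (P : ℚ[X]) (q : ℕ) (y : ℚ) :
    (convPow P q).eval y = ∑ j ∈ range (q + 1),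
      q.choose j * (-1) ^ (q - j) * y ^ j * (indefSum (P * X ^ (q - j))).eval y := by
  simp [convPow, eval_finsetSum]

theorem sum_range_eval_mul_sub_pow (P : ℚ[X]) (q N : ℕ) (y : ℚ) :
    ∑ a ∈ range N, P.eval (a : ℚ) * (y - a) ^ q = ∑ j ∈ range (q + 1),
      q.choose j * (-1) ^ (q - j) * y ^ j * (indefSum (P * X ^ (q - j))).eval (N : ℚ) := by
  simp only [indefSum_eval_natCast, eval_mul, eval_pow, eval_X, mul_sum]
  rw [sum_comm]
  refine sum_congr rfl fun a _ => ?_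
  rw [sub_eq_add_neg, add_pow, mul_sum]
  refine sum_congr rfl fun j _ => ?_
  rw [neg_pow]
  ring

theorem convPow_eval_natCast (P : ℚ[X]) {q : ℕ} (hq : q ≠ 0) (n : ℕ) :
    (convPow P q).eval (n : ℚ) = ∑ a ∈ range (n + 1), P.eval (a : ℚ) * ((n : ℚ) - a) ^ q := by
  rw [sum_range_succ, sub_self, zero_pow hq, mul_zero, add_zero, sum_range_eval_mul_sub_pow,
    convPow_eval]

theorem convPow_eval_neg_natCast {P : ℚ[X]} {e : ℕ} (hP0 : P.coeff 0 = 0) (hP : HasParity P e)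
    (q n : ℕ) : (convPow P q).eval (-(n : ℚ)) =
      (-1) ^ (e + q + 1) * ∑ a ∈ range (n + 1), P.eval (a : ℚ) * ((n : ℚ) - a) ^ q := by
  rw [sum_range_eval_mul_sub_pow, convPow_eval, mul_sum]
  refine sum_congr rfl fun j hj => ?_
  have hj : j ≤ q := Nat.lt_succ_iff.mp (mem_range.mp hj)
  have h0 : (P * X ^ (q - j)).coeff 0 = 0 := by simp [hP0]
  -- `-n = 1 - (n + 1)`: reflection turns the indefinite sum up to `-n` into one up to `n + 1`.
  have hS : (indefSum (P * X ^ (q - j))).eval (-(n : ℚ)) =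
      (-1) ^ (e + (q - j) + 1) * (indefSum (P * X ^ (q - j))).eval ((n + 1 : ℕ) : ℚ) := by
    rw [← indefSum_eval_one_sub h0 (hP.mul_X_pow _)]
    push_cast
    ring_nf
  have hsign : (-1 : ℚ) ^ j * (-1) ^ (e + (q - j) + 1) = (-1) ^ (e + q + 1) := by
    rw [← pow_add]
    congr 1
    omega
  rw [hS, neg_pow]
  linear_combination (q.choose j * (-1) ^ (q - j) * (n : ℚ) ^ j *
    (indefSum (P * X ^ (q - j))).eval ((n + 1 : ℕ) : ℚ)) * hsign

theorem hasParity_convPow {P : ℚ[X]} {e q : ℕ} (hq : q ≠ 0) (hP0 : P.coeff 0 = 0)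
    (hP : HasParity P e) : HasParity (convPow P q) (e + q + 1) :=
  hasParity_of_eval_neg fun n => by
    rw [convPow_eval_neg_natCast hP0 hP, convPow_eval_natCast P hq]

theorem coeff_zero_convPow (P : ℚ[X]) {q : ℕ} (hq : q ≠ 0) : (convPow P q).coeff 0 = 0 := by
  rw [coeff_zero_eq_eval_zero, ← Nat.cast_zero, convPow_eval_natCast P hq]
  simp [hq]

theorem natDegree_convPow_le (P : ℚ[X]) (q : ℕ) :
    (convPow P q).natDegree ≤ P.natDegree + q + 1 := by
  refine natDegree_sum_le_of_forall_le _ _ fun j hj => natDegree_mul_le.trans ?_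
  have hj : j ≤ q := Nat.lt_succ_iff.mp (mem_range.mp hj)
  have h1 := natDegree_C_mul_X_pow_le (q.choose j * (-1) ^ (q - j) : ℚ) j
  have h2 := (natDegree_indefSum_le (P * X ^ (q - j))).trans
    (Nat.add_le_add_right (natDegree_mul_le.trans (Nat.add_le_add_left (natDegree_X_pow_le _) _)) 1)
  omega

end Polynomial

open Polynomial

/-- The paper's `C̃^{d₀,…,d_k}`, for the `k + 1` exponents `d₀, …, d_k`. -/
noncomputable def polylogProductPoly : (k : ℕ) → (Fin (k + 1) → ℕ) → ℚ[X]
  | 0, d => X ^ d 0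
  | k + 1, d => convPow (polylogProductPoly k fun i => d i.castSucc) (d (Fin.last (k + 1)))

theorem coeff_prod_polylog_eq_eval : ∀ (k : ℕ) (d : Fin (k + 1) → ℕ), (∀ i, d i ≠ 0) →
    ∀ n : ℕ, PowerSeries.coeff n (∏ i, PowerSeries.mk fun n => (n : ℚ) ^ d i) =
      (polylogProductPoly k d).eval (n : ℚ)
  | 0, d, _, n => by simp [polylogProductPoly]
  | k + 1, d, hd, n => by
    rw [Fin.prod_univ_castSucc, PowerSeries.coeff_mul, Nat.sum_antidiagonal_eq_sum_range_succ_mk,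
      polylogProductPoly, convPow_eval_natCast _ (hd _)]
    refine sum_congr rfl fun a ha => ?_
    rw [coeff_prod_polylog_eq_eval k _ (fun i => hd _) a, PowerSeries.coeff_mk,
      Nat.cast_sub (mem_range_succ_iff.mp ha)]

theorem natDegree_polylogProductPoly_le :
    ∀ (k : ℕ) (d : Fin (k + 1) → ℕ), (polylogProductPoly k d).natDegree ≤ k + ∑ i, d i
  | 0, d => by simp [polylogProductPoly]
  | k + 1, d => by
    rw [polylogProductPoly, Fin.sum_univ_castSucc]
    have := natDegree_polylogProductPoly_le k fun i => d i.castSucc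
    have := natDegree_convPow_le (polylogProductPoly k fun i => d i.castSucc) (d (Fin.last _))
    omega

theorem coeff_zero_polylogProductPoly :
    ∀ (k : ℕ) (d : Fin (k + 1) → ℕ), (∀ i, d i ≠ 0) → (polylogProductPoly k d).coeff 0 = 0
  | 0, d, hd => by simp [polylogProductPoly, coeff_X_pow, (hd 0).symm]
  | k + 1, _, hd => coeff_zero_convPow _ (hd _)

theorem hasParity_polylogProductPoly : ∀ (k : ℕ) (d : Fin (k + 1) → ℕ), (∀ i, d i ≠ 0) →
    HasParity (polylogProductPoly k d) (k + ∑ i, d i)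
  | 0, d, _ => fun m hm => by
    simp only [polylogProductPoly, coeff_X_pow, ne_eq, ite_eq_right_iff, not_forall] at hm
    simp [hm.1]
  | k + 1, d, hd => by
    have h := hasParity_convPow (hd (Fin.last _))
      (coeff_zero_polylogProductPoly k (fun i => d i.castSucc) fun i => hd _)
      (hasParity_polylogProductPoly k (fun i => d i.castSucc) fun i => hd _)
    rwa [polylogProductPoly, Fin.sum_univ_castSucc, show k + 1 + (∑ i : Fin (k + 1), d i.castSucc
      + d (Fin.last _)) = k + ∑ i : Fin (k + 1), d i.castSucc + d (Fin.last _) + 1 by ring]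

/-- For positive integers `d₁,...,d_k`, the product `Li_{-d₁}(z) ⋯ Li_{-d_k}(z)`
(of formal power series `Li_{-d}(z) = ∑_{n≥0} n^d z^n`) is a unique rational linear combination
`∑_{j=1}^{k-1+∑dᵢ} c_j Li_{-j}(z)`, and `c_j = 0` unless `j ≡ k - 1 + ∑dᵢ (mod 2)`. -/
theorem polylog_product_decomposition (k : ℕ) (hk : 1 ≤ k) (d : Fin k → ℕ)
    (hd : ∀ i, 1 ≤ d i) :
    ∃ c : ℕ → ℚ,
      ((∀ j, j ∉ Finset.Icc 1 (k - 1 + ∑ i, d i) → c j = 0) ∧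
        (∏ i : Fin k, PowerSeries.mk fun n => (n : ℚ) ^ d i) =
          ∑ j ∈ Finset.Icc 1 (k - 1 + ∑ i, d i),
            c j • PowerSeries.mk fun n => (n : ℚ) ^ j) ∧
      (∀ j, c j ≠ 0 → j % 2 = (k - 1 + ∑ i, d i) % 2) ∧
      ∀ c' : ℕ → ℚ,
        (∀ j, j ∉ Finset.Icc 1 (k - 1 + ∑ i, d i) → c' j = 0) →
        ((∏ i : Fin k, PowerSeries.mk fun n => (n : ℚ) ^ d i) =
            ∑ j ∈ Finset.Icc 1 (k - 1 + ∑ i, d i),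
              c' j • PowerSeries.mk fun n => (n : ℚ) ^ j) →
        c' = c := by
  obtain ⟨k, rfl⟩ : ∃ k', k = k' + 1 := ⟨k - 1, by omega⟩
  have hd : ∀ i, d i ≠ 0 := fun i => Nat.one_le_iff_ne_zero.mp (hd i)
  rw [Nat.add_sub_cancel]
  set P := polylogProductPoly k d
  have hprod : (∏ i, PowerSeries.mk fun n => (n : ℚ) ^ d i) = evalSeries P :=
    PowerSeries.ext fun n => by simp [evalSeries, P, coeff_prod_polylog_eq_eval k d hd]
  have hsupp : ∀ j ∉ Icc 1 (k + ∑ i, d i), P.coeff j = 0 := by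
    intro j hj
    rcases Nat.eq_zero_or_pos j with rfl | hj0
    · exact coeff_zero_polylogProductPoly k d hd
    · have : P.natDegree ≤ k + ∑ i, d i := natDegree_polylogProductPoly_le k d
      exact coeff_eq_zero_of_natDegree_lt (by simp at hj; omega)
  have hseries (c : ℕ → ℚ) : ∑ j ∈ Icc 1 (k + ∑ i, d i), c j • PowerSeries.mk (fun n => (n : ℚ) ^ j)
      = evalSeries (∑ j ∈ Icc 1 (k + ∑ i, d i), c j • X ^ j) := by
    simp [map_sum, evalSeries_X_pow]
  refine ⟨P.coeff, ⟨hsupp, ?_⟩, hasParity_polylogProductPoly k d hd, fun c' hc' h => ?_⟩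
  · rw [hprod, hseries, coeff_injective (coeff_sum_smul_X_pow hsupp)]
  · rw [hprod, hseries] at h
    rw [← coeff_sum_smul_X_pow hc', evalSeries_injective h.symm]
end

section
/- For positive integers d_1,...,d_k (with D := Σd_i), one has (1/2)·((1+z)/(1-z))·∏_{i=1}^k Li_{-d_i-1}(z) = Σ_{j=1}^{D+2k} c_j Li_{-j}(z) for rational c_j, and c_j = 0 unless j ≡ D (mod 2). -/
open Polynomial Finset

/-- Faulhaber polynomial: `spoly e` evaluated at `n : ℕ` equals `∑ m < n, m ^ e`. -/
noncomputable def spoly (e : ℕ) : Polynomial ℚ :=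
  ∑ i ∈ range (e + 1),
    C ((_root_.bernoulli i) * ((e + 1).choose i) / (e + 1)) * X ^ (e + 1 - i)

/-- `tpoly e` evaluated at `n : ℕ` equals `(∑ m < n, m ^ e) + n ^ e / 2`. -/
noncomputable def tpoly (e : ℕ) : Polynomial ℚ := spoly e + C (1/2) * X ^ e

/-- Coefficients are supported in positive degrees of parity `D`. -/
def Par (D : ℕ) (p : Polynomial ℚ) : Prop := ∀ j, p.coeff j ≠ 0 → 1 ≤ j ∧ j % 2 = D % 2

lemma spoly_eval (e n : ℕ) : (spoly e).eval (n : ℚ) = ∑ m ∈ range n, (m : ℚ) ^ e := by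
  rw [_root_.sum_range_pow n e]
  simp only [spoly, eval_finset_sum, eval_mul, eval_C, eval_pow, eval_X]
  exact Finset.sum_congr rfl fun i _ => by push_cast; ring

lemma tpoly_eval (e n : ℕ) :
    (tpoly e).eval (n : ℚ) = (∑ m ∈ range n, (m : ℚ) ^ e) + 1/2 * (n : ℚ) ^ e := by
  simp [tpoly, spoly_eval]

lemma tpoly_natDegree (e : ℕ) : (tpoly e).natDegree ≤ e + 1 := by
  apply Polynomial.natDegree_add_le_of_degree_le
  · apply Polynomial.natDegree_sum_le_of_forall_le
    intro i hi
    exact (natDegree_C_mul_le _ _).trans ((natDegree_X_pow _).le.trans (by omega))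
  · exact (natDegree_C_mul_le _ _).trans ((natDegree_X_pow _).le.trans (by omega))

lemma bernoulli_odd_zero {i : ℕ} (h : i % 2 = 1) (hi : 1 < i) : _root_.bernoulli i = 0 := by
  rw [bernoulli_eq_bernoulli'_of_ne_one (by omega)]
  exact bernoulli'_eq_zero_of_odd (Nat.odd_iff.2 h) hi

lemma tpoly_Par (e : ℕ) (he : 1 ≤ e) : Par (e + 1) (tpoly e) := by
  have he1 : (1:ℕ) ∈ range (e+1) := by simp; omega
  have hterm : C ((_root_.bernoulli 1) * (((e + 1).choose 1 : ℕ) : ℚ) / ((e:ℚ) + 1)) *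
      X ^ (e + 1 - 1) = -(C (1/2 : ℚ) * X ^ e) := by
    have h1 : e + 1 - 1 = e := rfl
    have hne : ((e:ℚ) + 1) ≠ 0 := by positivity
    rw [h1, neg_mul_eq_neg_mul, ← C_neg]
    congr 1
    rw [_root_.bernoulli_one, Nat.choose_one_right]
    push_cast
    field_simp
  have hsplit : tpoly e =
      ∑ i ∈ (range (e + 1)).erase 1,
        C ((_root_.bernoulli i) * ((e + 1).choose i) / (e + 1)) * X ^ (e + 1 - i) := by
    rw [tpoly, spoly, ← Finset.add_sum_erase _ _ he1]
    push_cast at hterm ⊢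
    rw [hterm]
    ring
  intro j hj
  rw [hsplit, Polynomial.finset_sum_coeff] at hj
  obtain ⟨i, hi, hne⟩ := Finset.exists_ne_zero_of_sum_ne_zero hj
  rw [Finset.mem_erase, Finset.mem_range] at hi
  rw [coeff_C_mul, coeff_X_pow] at hne
  have hij : j = e + 1 - i := by
    by_contra h
    rw [if_neg h, mul_zero] at hne
    exact hne rfl
  have hb : _root_.bernoulli i ≠ 0 := fun h => hne (by rw [h]; simp)
  have hpar : i % 2 = 0 ∨ i = 0 := by
    by_contra h
    push_neg at h
    exact hb (bernoulli_odd_zero (by omega) (by omega))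
  omega

lemma Par_sum {D : ℕ} {ι : Type*} {s : Finset ι} {f : ι → Polynomial ℚ}
    (h : ∀ i ∈ s, Par D (f i)) : Par D (∑ i ∈ s, f i) := by
  intro j hj
  rw [Polynomial.finset_sum_coeff] at hj
  obtain ⟨i, hi, hne⟩ := Finset.exists_ne_zero_of_sum_ne_zero hj
  exact h i hi j hne

/-- Polynomial whose value at `n : ℕ` is `∑_{m ≤ n} m^a (n-m)^b`. -/
noncomputable def convMon (a b : ℕ) : Polynomial ℚ :=
  ∑ i ∈ range (b + 1), C (((-1:ℚ))^(b-i) * (b.choose i)) * (tpoly (a + (b - i)) * X ^ i)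

lemma convMon_eval (a b : ℕ) (hb : 1 ≤ b) (n : ℕ) :
    (convMon a b).eval (n:ℚ) = ∑ m ∈ range (n+1), (m:ℚ)^a * (((n - m : ℕ) : ℚ))^b := by
  have hsum0 : ∑ i ∈ range (b+1), ((-1:ℚ))^(b-i) * ((b.choose i) : ℚ) = 0 := by
    have h := add_pow (1:ℚ) (-1) b
    simp only [one_pow, one_mul, add_neg_cancel] at h
    rw [zero_pow (by omega)] at h
    rw [← h]
  have cast1 : ∀ m ∈ range (n+1), (m:ℚ)^a * (((n - m : ℕ):ℚ))^b
      = (m:ℚ)^a * ((n:ℚ)-(m:ℚ))^b := by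
    intro m hm
    rw [Nat.cast_sub (by simpa using Nat.lt_succ_iff.mp (Finset.mem_range.mp hm))]
  rw [Finset.sum_congr rfl cast1, Finset.sum_range_succ, sub_self,
    zero_pow (by omega : b ≠ 0), mul_zero, add_zero]
  have expand : (convMon a b).eval (n:ℚ)
      = ∑ i ∈ range (b+1), ((-1:ℚ))^(b-i) * ((b.choose i) : ℚ) *
          (((∑ m ∈ range n, (m:ℚ)^(a+(b-i))) + 1/2 * (n:ℚ)^(a+(b-i))) * (n:ℚ)^i) := by
    simp only [convMon, eval_finset_sum, eval_mul, eval_C, eval_pow, eval_X, tpoly_eval]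
  rw [expand]
  have split : ∀ i ∈ range (b+1), ((-1:ℚ))^(b-i) * ((b.choose i) : ℚ) *
          (((∑ m ∈ range n, (m:ℚ)^(a+(b-i))) + 1/2 * (n:ℚ)^(a+(b-i))) * (n:ℚ)^i)
      = (∑ m ∈ range n, ((m:ℚ)^a * ((n:ℚ)^i * (-(m:ℚ))^(b-i) * ((b.choose i):ℚ))))
        + ((-1:ℚ))^(b-i) * ((b.choose i) : ℚ) * (1/2 * (n:ℚ)^(a+b)) := by
    intro i hi
    rw [Finset.mem_range] at hi
    have hexp : a + (b - i) + i = a + b := by omega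
    rw [add_mul, mul_add]
    congr 1
    · rw [Finset.sum_mul, Finset.mul_sum]
      refine Finset.sum_congr rfl fun m _ => ?_
      rw [neg_pow, pow_add]
      ring
    · rw [← hexp, pow_add]
      ring
  rw [Finset.sum_congr rfl split, Finset.sum_add_distrib]
  have second : ∑ i ∈ range (b+1), ((-1:ℚ))^(b-i) * ((b.choose i) : ℚ) * (1/2 * (n:ℚ)^(a+b))
      = 0 := by
    rw [← Finset.sum_mul, hsum0, zero_mul]
  rw [second, add_zero, Finset.sum_comm]
  refine Finset.sum_congr rfl fun m _ => ?_
  rw [← Finset.mul_sum, sub_eq_add_neg, add_pow (n:ℚ) (-(m:ℚ)) b]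

lemma convMon_Par (a b : ℕ) (ha : 1 ≤ a) (hb : 1 ≤ b) : Par (a + b + 1) (convMon a b) := by
  apply Par_sum
  intro i hi
  rw [Finset.mem_range] at hi
  intro j hj
  rw [coeff_C_mul, coeff_mul_X_pow'] at hj
  have hij : i ≤ j := by by_contra h; simp [h] at hj
  rw [if_pos hij] at hj
  have ht : (tpoly (a + (b - i))).coeff (j - i) ≠ 0 := by
    intro h; rw [h, mul_zero] at hj; exact hj rfl
  have := tpoly_Par (a + (b - i)) (by omega) _ ht
  omega

lemma convMon_natDegree (a b : ℕ) : (convMon a b).natDegree ≤ a + b + 1 := by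
  apply Polynomial.natDegree_sum_le_of_forall_le
  intro i hi
  rw [Finset.mem_range] at hi
  refine (natDegree_C_mul_le _ _).trans (natDegree_mul_le.trans ?_)
  have := tpoly_natDegree (a + (b - i))
  rw [natDegree_X_pow]
  omega

/-- The power series `Li_{-e}`, with coefficients `n ^ e`. -/
noncomputable def phi (e : ℕ) : PowerSeries ℚ := PowerSeries.mk fun n => (n:ℚ)^e

lemma prod_poly {k : ℕ} (d : Fin k → ℕ) (hd : ∀ i, 1 ≤ d i) (s : Finset (Fin k))
    (hs : s.Nonempty) : ∃ G : Polynomial ℚ,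
    (∀ n : ℕ, G.eval (n:ℚ) = PowerSeries.coeff n (∏ i ∈ s, phi (d i + 1))) ∧
    G.natDegree ≤ (∑ i ∈ s, d i) + 2 * s.card - 1 ∧
    Par ((∑ i ∈ s, d i) + 2 * s.card - 1) G := by
  induction hs using Finset.Nonempty.cons_induction with
  | singleton i0 =>
    refine ⟨X ^ (d i0 + 1), fun n => ?_, ?_, ?_⟩
    · simp [phi]
    · simp only [Finset.card_singleton, Finset.sum_singleton, natDegree_X_pow]
      omega
    · intro j hj
      rw [coeff_X_pow] at hj
      have : j = d i0 + 1 := by by_contra h; simp [h] at hj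
      have := hd i0
      simp only [Finset.card_singleton, Finset.sum_singleton]
      omega
  | cons i0 s hi0 hs ih =>
    obtain ⟨G', hev, hdeg, hpar⟩ := ih
    set e := d i0 + 1 with he
    have he1 : 1 ≤ e := by omega
    set M' := (∑ i ∈ s, d i) + 2 * s.card - 1 with hM'
    have hcard : 1 ≤ s.card := hs.card_pos
    refine ⟨∑ t ∈ range (G'.natDegree + 1), C (G'.coeff t) * convMon t e,
      fun n => ?_, ?_, ?_⟩
    · rw [Finset.prod_cons, PowerSeries.coeff_mul,
        Finset.Nat.sum_antidiagonal_eq_sum_range_succ_mk]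
      simp only [phi, PowerSeries.coeff_mk]
      calc Polynomial.eval (n:ℚ) (∑ t ∈ range (G'.natDegree + 1), C (G'.coeff t) * convMon t e)
          = ∑ t ∈ range (G'.natDegree + 1), (G'.coeff t) *
              ∑ m ∈ range (n+1), (m:ℚ)^t * (((n - m : ℕ) : ℚ))^e := by
            simp only [eval_finset_sum, eval_mul, eval_C]
            exact Finset.sum_congr rfl fun t _ => by rw [convMon_eval t e he1 n]
        _ = ∑ m ∈ range (n+1), (∑ t ∈ range (G'.natDegree + 1), (G'.coeff t) * (m:ℚ)^t) *
              (((n - m : ℕ) : ℚ))^e := by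
            simp_rw [Finset.mul_sum, Finset.sum_mul]
            rw [Finset.sum_comm]
            exact Finset.sum_congr rfl fun m _ => Finset.sum_congr rfl fun t _ => by ring
        _ = ∑ m ∈ range (n+1), G'.eval ((m:ℕ):ℚ) * (((n - m : ℕ) : ℚ))^e := by
            exact Finset.sum_congr rfl fun m _ => by rw [Polynomial.eval_eq_sum_range]
        _ = ∑ m ∈ range (n+1), ((m:ℕ):ℚ)^e * G'.eval (((n - m : ℕ):ℕ):ℚ) := by
            rw [← Finset.sum_range_reflect]
            refine Finset.sum_congr rfl fun m hm => ?_
            rw [Finset.mem_range] at hm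
            have h1 : n + 1 - 1 - m = n - m := by omega
            have h2 : n - (n - m) = m := by omega
            rw [h1, h2, mul_comm]
        _ = ∑ m ∈ range (n+1), (m:ℚ)^e * (PowerSeries.coeff (n-m)
              (∏ i ∈ s, phi (d i + 1))) := by
            exact Finset.sum_congr rfl fun m _ => by rw [hev]
    · apply Polynomial.natDegree_sum_le_of_forall_le
      intro t ht
      rw [Finset.mem_range] at ht
      refine (natDegree_C_mul_le _ _).trans ((convMon_natDegree t e).trans ?_)
      rw [Finset.sum_cons, Finset.card_cons]
      omega
    · apply Par_sum
      intro t ht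
      intro j hj
      rw [coeff_C_mul] at hj
      have hct : G'.coeff t ≠ 0 := by intro h; rw [h, zero_mul] at hj; exact hj rfl
      have hcm : (convMon t e).coeff j ≠ 0 := by intro h; rw [h, mul_zero] at hj; exact hj rfl
      obtain ⟨ht1, ht2⟩ := hpar t hct
      obtain ⟨hj1, hj2⟩ := convMon_Par t e ht1 he1 j hcm
      rw [Finset.sum_cons, Finset.card_cons]
      exact ⟨hj1, by omega⟩

lemma ratfunc_coe_C (a : ℚ) : ((RatFunc.C a : RatFunc ℚ) : LaurentSeries ℚ) = HahnSeries.C a := by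
  rw [← RatFunc.algebraMap_C]
  erw [← RatFunc.coe_coe, Polynomial.coe_C, HahnSeries.ofPowerSeries_C]

/-- For positive integers `d₁,...,d_k` with `D = ∑ dᵢ`, in the field of rational
functions: `(1/2)·((1+z)/(1-z))·∏ᵢ Li_{-dᵢ-1}(z) = ∑_{j=1}^{D+2k} c_j Li_{-j}(z)` for rational
`c_j`, with `c_j = 0` unless `j ≡ D (mod 2)`. The rational functions `Li_{-e}(z)` are
characterized by their Laurent series expansions at `0` having coefficients `n^e` for `n ≥ 0`. -/
theorem half_coth_polylog_product (k : ℕ) (hk : 1 ≤ k) (d : Fin k → ℕ) (hd : ∀ i, 1 ≤ d i)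
    (L : ℕ → RatFunc ℚ)
    (hL : ∀ e : ℕ, ∀ n : ℤ,
      ((L e : LaurentSeries ℚ)).coeff n = if 0 ≤ n then (n : ℚ) ^ e else 0) :
    ∃ c : ℕ → ℚ,
      (∀ j, j ∉ Finset.Icc 1 (∑ i, d i + 2 * k) → c j = 0) ∧
      (1 / 2 : ℚ) • (((1 + RatFunc.X) / (1 - RatFunc.X)) * ∏ i : Fin k, L (d i + 1)) =
        ∑ j ∈ Finset.Icc 1 (∑ i, d i + 2 * k), c j • L j ∧
      ∀ j, c j ≠ 0 → j % 2 = (∑ i, d i) % 2 := by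
  have : NeZero k := ⟨by omega⟩
  set D := ∑ i, d i with hD
  set M := D + 2 * k with hM
  have hDk : 1 ≤ D := le_trans (hd ⟨0, by omega⟩) (Finset.single_le_sum (f := d)
    (fun i _ => Nat.zero_le _) (Finset.mem_univ _))
  -- the polynomial G matching coefficients of the product
  obtain ⟨G, hGev, hGdeg, hGpar⟩ := prod_poly d hd Finset.univ Finset.univ_nonempty
  rw [Finset.card_univ, Fintype.card_fin] at hGdeg hGpar
  -- the polynomial p matching coefficients of the full left-hand side
  set p : Polynomial ℚ := ∑ t ∈ range (G.natDegree + 1), C (G.coeff t) * tpoly t with hp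
  have hpev : ∀ n : ℕ, p.eval (n:ℚ)
      = (∑ m ∈ range n, G.eval ((m:ℕ):ℚ)) + 1/2 * G.eval (n:ℚ) := by
    intro n
    rw [hp]
    simp only [eval_finset_sum, eval_mul, eval_C, tpoly_eval]
    rw [Polynomial.eval_eq_sum_range (p := G) ((n:ℕ):ℚ)]
    simp_rw [mul_add, Finset.sum_add_distrib, Finset.mul_sum]
    rw [Finset.sum_comm]
    congr 1
    · exact Finset.sum_congr rfl fun m _ =>
        by rw [Polynomial.eval_eq_sum_range (p := G) ((m:ℕ):ℚ)]
    · exact Finset.sum_congr rfl fun t _ => by ring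
  have hpdeg : p.natDegree ≤ M := by
    apply Polynomial.natDegree_sum_le_of_forall_le
    intro t ht
    rw [Finset.mem_range] at ht
    refine (natDegree_C_mul_le _ _).trans ((tpoly_natDegree t).trans ?_)
    omega
  have hppar : Par M p := by
    apply Par_sum
    intro t ht
    intro j hj
    rw [coeff_C_mul] at hj
    have hct : G.coeff t ≠ 0 := by intro h; rw [h, zero_mul] at hj; exact hj rfl
    have hcm : (tpoly t).coeff j ≠ 0 := by intro h; rw [h, mul_zero] at hj; exact hj rfl
    obtain ⟨ht1, ht2⟩ := hGpar t hct
    obtain ⟨hj1, hj2⟩ := tpoly_Par t ht1 j hcm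
    exact ⟨hj1, by omega⟩
  have hp0 : p.coeff 0 = 0 := by
    by_contra h
    exact absurd (hppar 0 h).1 (by omega)
  have hG0 : G.eval ((0:ℕ):ℚ) = 0 := by
    have h0 : G.coeff 0 = 0 := by
      by_contra h
      exact absurd (hGpar 0 h).1 (by omega)
    rw [Nat.cast_zero, ← Polynomial.coeff_zero_eq_eval_zero, h0]
  refine ⟨fun j => p.coeff j, ?_, ?_, ?_⟩
  · intro j hj
    show p.coeff j = 0
    rw [Finset.mem_Icc] at hj
    rcases Nat.lt_or_ge M j with h | h
    · exact Polynomial.coeff_eq_zero_of_natDegree_lt (lt_of_le_of_lt hpdeg h)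
    · have : j = 0 := by omega
      rw [this, hp0]
  swap
  · intro j hj
    have hj' : p.coeff j ≠ 0 := hj
    have := (hppar j hj').2
    omega
  -- the main generating function identity
  set S : PowerSeries ℚ := ∑ j ∈ Finset.Icc 1 M, PowerSeries.C (p.coeff j) * phi j with hS
  have hSc : ∀ n : ℕ, PowerSeries.coeff n S = p.eval (n:ℚ) := by
    intro n
    rw [hS, map_sum]
    simp only [PowerSeries.coeff_C_mul, phi, PowerSeries.coeff_mk]
    rw [Polynomial.eval_eq_sum_range' (lt_of_le_of_lt hpdeg (Nat.lt_succ_self M)) ((n:ℕ):ℚ),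
      Finset.range_eq_Ico, Finset.sum_eq_sum_Ico_succ_bot (by omega)]
    rw [hp0, zero_mul, zero_add, Nat.succ_eq_add_one, Finset.Ico_add_one_right_eq_Icc, zero_add]
  have psEq : PowerSeries.C (1/2) * ((1 + PowerSeries.X) * ∏ i : Fin k, phi (d i + 1))
      = (1 - PowerSeries.X) * S := by
    ext n
    rw [PowerSeries.coeff_C_mul, add_mul, one_mul, map_add, sub_mul, one_mul, map_sub, hSc]
    have hΦ : ∀ m : ℕ, PowerSeries.coeff m (∏ i : Fin k, phi (d i + 1))
        = G.eval ((m:ℕ):ℚ) := fun m => (hGev m).symm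
    cases n with
    | zero =>
      rw [PowerSeries.coeff_zero_X_mul, PowerSeries.coeff_zero_X_mul, hΦ 0, hG0]
      have : p.eval ((0:ℕ):ℚ) = 0 := by
        rw [Nat.cast_zero, ← Polynomial.coeff_zero_eq_eval_zero, hp0]
      rw [this]
      ring
    | succ m =>
      rw [PowerSeries.coeff_succ_X_mul, PowerSeries.coeff_succ_X_mul, hΦ, hΦ, hSc,
        hpev (m+1), hpev m, Finset.sum_range_succ]
      push_cast
      ring
  -- transfer to rational functions
  have hLcoe : ∀ e : ℕ, ((L e : RatFunc ℚ) : LaurentSeries ℚ)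
      = ((phi e : PowerSeries ℚ) : LaurentSeries ℚ) := by
    intro e
    apply HahnSeries.ext
    funext n
    rw [hL e n, PowerSeries.coeff_coe]
    rcases lt_or_ge n 0 with h | h
    · rw [if_neg (not_le.mpr h), if_pos h]
    · rw [if_pos h, if_neg (not_lt.mpr h)]
      simp only [phi, PowerSeries.coeff_mk]
      have : ((n.natAbs : ℕ) : ℚ) = (n:ℚ) := by
        rw [Nat.cast_natAbs, abs_of_nonneg h]
      rw [this]
  have hXne : (1 - RatFunc.X : RatFunc ℚ) ≠ 0 := by
    intro h
    have h1 : (RatFunc.X : RatFunc ℚ) = 1 := by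
      have := sub_eq_zero.mp h
      exact this.symm
    have h2 := congrArg (fun f : RatFunc ℚ => (f : LaurentSeries ℚ).coeff 1) h1
    simp only [RatFunc.coe_X, map_one] at h2
    rw [HahnSeries.coeff_single_same, HahnSeries.coeff_one] at h2
    norm_num at h2
  have hbridge : ∀ f : PowerSeries ℚ,
      ((f : PowerSeries ℚ) : LaurentSeries ℚ) = HahnSeries.ofPowerSeries ℤ ℚ f := fun f => rfl
  have hcoeP : ((∏ i : Fin k, L (d i + 1) : RatFunc ℚ) : LaurentSeries ℚ)
      = HahnSeries.ofPowerSeries ℤ ℚ (∏ i : Fin k, phi (d i + 1)) := by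
    rw [map_prod, map_prod]
    exact Finset.prod_congr rfl fun i _ => by
      rw [hLcoe]
  have key : (1/2:ℚ) • ((1 + RatFunc.X) * ∏ i : Fin k, L (d i + 1))
      = (1 - RatFunc.X) * ∑ j ∈ Finset.Icc 1 M, p.coeff j • L j := by
    apply (show Function.Injective (fun f : RatFunc ℚ => (f : LaurentSeries ℚ)) from
      RingHom.injective _)
    beta_reduce
    rw [RatFunc.smul_eq_C_mul]
    simp only [RatFunc.smul_eq_C_mul]
    have hcoeS : ((∑ j ∈ Finset.Icc 1 M, RatFunc.C (p.coeff j) * L j : RatFunc ℚ) :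
        LaurentSeries ℚ) = HahnSeries.ofPowerSeries ℤ ℚ S := by
      rw [map_sum, hS, map_sum]
      refine Finset.sum_congr rfl fun j _ => ?_
      rw [map_mul, map_mul, HahnSeries.ofPowerSeries_C]
      congr 1
      · rw [ratfunc_coe_C]
      · rw [hLcoe]
    simp only [map_mul, map_add, map_one, ratfunc_coe_C,
      RatFunc.coe_X, map_sub,
      hcoeP, hcoeS]
    have h3 := congrArg (HahnSeries.ofPowerSeries ℤ ℚ) psEq
    simp only [map_mul, map_add, map_sub, map_one, HahnSeries.ofPowerSeries_C,
      HahnSeries.ofPowerSeries_X] at h3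
    exact h3
  apply mul_left_cancel₀ hXne
  rw [RatFunc.smul_eq_C_mul, mul_left_comm, ← RatFunc.smul_eq_C_mul, ← mul_assoc,
    mul_comm (1 - RatFunc.X) ((1 + RatFunc.X) / (1 - RatFunc.X)),
    div_mul_cancel₀ _ hXne]
  exact key
end

section
/- For the power series S(z) := (e^{z/2} - e^{-z/2})/z = Σ_{i≥0} s_i z^{2i}, and for any positive integer k, the convolution identity Σ_{k_1+k_2=k, k_1,k_2 ≥ 0} S(w k_1) S(w k_2) k_1 k_2 = (1/w^2)·( k (e^{wk/2} + e^{-wk/2}) − ((e^{w/2}+e^{-w/2})/(e^{w/2}−e^{-w/2}))·(e^{wk/2} − e^{-wk/2}) ) holds as an identity of formal Laurent series in w. -/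
/-!
Put `u = e^{w/2}` and `v = e^{-w/2}`, so that `w m S(w m) = u^m - v^m`. The left side is then
`w⁻² ∑_{p+q=k} (u^p - v^p)(u^q - v^q)`. Expanding, the products `u^p u^q` and `v^p v^q` all equal
`u^k`, `v^k`, while the cross terms give twice the geometric sum
`∑_{p+q=k} u^p v^q = (u^{k+1} - v^{k+1}) / (u - v)`; what remains is an identity valid for any
`u ≠ v` in a field.
-/

noncomputable section

/-- The exponential `e^{rw}` as a formal power series in `w` over `ℚ`. -/
def expSeries (r : ℚ) : PowerSeries ℚ :=
  PowerSeries.mk fun n => r ^ n / n.factorial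

/-- `S(w·m)` where `S(z) = sinh(z/2)/(z/2) = ∑ z^{2i}/(2^{2i} (2i+1)!)`, as a power series in `w`. -/
def Sser (m : ℕ) : PowerSeries ℚ :=
  PowerSeries.mk fun n =>
    if Even n then ((m : ℚ)) ^ n / (2 ^ n * (n + 1).factorial) else 0

/-- Inclusion of power series into Laurent series. -/
def toL (f : PowerSeries ℚ) : LaurentSeries ℚ := HahnSeries.ofPowerSeries ℤ ℚ f

open Finset PowerSeries

section Convolution

variable {R : Type*} [CommRing R] (u v : R) (k : ℕ)

theorem sum_antidiagonal_pow_mul_pow_mul_sub :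
    (∑ pq ∈ antidiagonal k, u ^ pq.1 * v ^ pq.2) * (u - v) = u ^ (k + 1) - v ^ (k + 1) := by
  rw [Nat.sum_antidiagonal_eq_sum_range_succ (fun p q => u ^ p * v ^ q), ← geom_sum₂_mul]
  simp only [Nat.succ_eq_add_one, Nat.add_sub_cancel]

theorem sub_mul_sum_antidiagonal_pow_sub_pow_mul_pow_sub_pow :
    (u - v) * ∑ pq ∈ antidiagonal k, (u ^ pq.1 - v ^ pq.1) * (u ^ pq.2 - v ^ pq.2) =
      (u - v) * k * (u ^ k + v ^ k) - (u + v) * (u ^ k - v ^ k) := by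
  have hterm : ∀ pq ∈ antidiagonal k, (u ^ pq.1 - v ^ pq.1) * (u ^ pq.2 - v ^ pq.2) =
      (u ^ k + v ^ k) - (u ^ pq.1 * v ^ pq.2 + u ^ pq.2 * v ^ pq.1) := by
    intro pq hpq
    rw [← mem_antidiagonal.1 hpq, pow_add, pow_add]
    ring
  have hswap : ∑ pq ∈ antidiagonal k, u ^ pq.2 * v ^ pq.1 =
      ∑ pq ∈ antidiagonal k, u ^ pq.1 * v ^ pq.2 :=
    Nat.sum_antidiagonal_swap (f := fun pq => u ^ pq.1 * v ^ pq.2)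
  rw [sum_congr rfl hterm, sum_sub_distrib, sum_const, Nat.card_antidiagonal, sum_add_distrib,
    hswap, nsmul_eq_mul, Nat.cast_succ]
  linear_combination (-2 : R) * sum_antidiagonal_pow_mul_pow_mul_sub u v k

end Convolution

theorem sum_antidiagonal_pow_sub_pow_mul_pow_sub_pow {K : Type*} [Field K] {u v : K} (huv : u ≠ v)
    (k : ℕ) :
    ∑ pq ∈ antidiagonal k, (u ^ pq.1 - v ^ pq.1) * (u ^ pq.2 - v ^ pq.2) =
      k * (u ^ k + v ^ k) - (u + v) / (u - v) * (u ^ k - v ^ k) := by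
  apply mul_left_cancel₀ (sub_ne_zero.2 huv)
  rw [sub_mul_sum_antidiagonal_pow_sub_pow_mul_pow_sub_pow]
  field_simp

theorem expSeries_eq_rescale (r : ℚ) : expSeries r = rescale r (exp ℚ) := by
  ext n
  simp [expSeries, coeff_rescale, coeff_exp, div_eq_mul_inv]

theorem expSeries_pow (r : ℚ) (m : ℕ) : expSeries r ^ m = expSeries (m * r) := by
  rw [expSeries_eq_rescale, expSeries_eq_rescale, ← map_pow, exp_pow_eq_rescale_exp,
    rescale_rescale]

theorem expSeries_injective : Function.Injective expSeries := fun a b h => by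
  simpa [expSeries] using congrArg (coeff 1) h

theorem X_mul_natCast_mul_Sser (m : ℕ) :
    X * ((m : PowerSeries ℚ) * Sser m) = expSeries (m / 2) - expSeries (-(m / 2)) := by
  ext (_ | n)
  · simp [expSeries]
  · rw [coeff_succ_X_mul, ← map_natCast (C (R := ℚ)), coeff_C_mul, map_sub]
    simp only [Sser, expSeries, coeff_mk]
    rcases Nat.even_or_odd n with hn | hn
    · rw [if_pos hn, hn.add_one.neg_pow]
      field_simp
      rw [div_pow]
      field_simp
      ring
    · rw [if_neg (Nat.not_even_iff_odd.2 hn), hn.add_one.neg_pow, sub_self, mul_zero]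

theorem toL_X_ne_zero : toL X ≠ 0 := by
  rw [toL, HahnSeries.ofPowerSeries_X]
  exact HahnSeries.single_ne_zero one_ne_zero

theorem toL_expSeries_pow (r : ℚ) (m : ℕ) : toL (expSeries r) ^ m = toL (expSeries (m * r)) := by
  rw [toL, ← map_pow, expSeries_pow, toL]

theorem toL_X_mul_natCast_mul_Sser (m : ℕ) :
    toL X * (m * toL (Sser m)) = toL (expSeries (m / 2)) - toL (expSeries (-(m / 2))) := by
  simpa [toL] using congrArg (HahnSeries.ofPowerSeries ℤ ℚ) (X_mul_natCast_mul_Sser m)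

theorem Sser_convolution_general (k : ℕ) :
    ∑ pq ∈ Finset.HasAntidiagonal.antidiagonal k,
        toL (Sser pq.1) * toL (Sser pq.2) * ((pq.1 : LaurentSeries ℚ)) * ((pq.2 : LaurentSeries ℚ)) =
      (toL PowerSeries.X ^ 2)⁻¹ *
        ((k : LaurentSeries ℚ) * (toL (expSeries (k / 2)) + toL (expSeries (-(k / 2)))) -
          (toL (expSeries (1 / 2)) + toL (expSeries (-(1 / 2)))) /
              (toL (expSeries (1 / 2)) - toL (expSeries (-(1 / 2)))) *
            (toL (expSeries (k / 2)) - toL (expSeries (-(k / 2))))) := by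
  set u := toL (expSeries (1 / 2))
  set v := toL (expSeries (-(1 / 2)))
  have hu : ∀ m : ℕ, toL (expSeries (m / 2)) = u ^ m := fun m => by
    rw [toL_expSeries_pow, mul_one_div]
  have hv : ∀ m : ℕ, toL (expSeries (-(m / 2))) = v ^ m := fun m => by
    rw [toL_expSeries_pow, mul_neg, mul_one_div]
  have huv : u ≠ v := by
    refine fun h => absurd (expSeries_injective (HahnSeries.ofPowerSeries_injective h)) ?_
    norm_num
  have hS : ∀ m : ℕ, toL (Sser m) * m = (toL X)⁻¹ * (u ^ m - v ^ m) := fun m => by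
    rw [eq_inv_mul_iff_mul_eq₀ toL_X_ne_zero, mul_comm (toL (Sser m)), toL_X_mul_natCast_mul_Sser,
      hu, hv]
  have hterm : ∀ pq ∈ antidiagonal k,
      toL (Sser pq.1) * toL (Sser pq.2) * (pq.1 : LaurentSeries ℚ) * (pq.2 : LaurentSeries ℚ) =
        (toL X ^ 2)⁻¹ * ((u ^ pq.1 - v ^ pq.1) * (u ^ pq.2 - v ^ pq.2)) := fun pq _ => by
    rw [mul_right_comm _ _ (pq.1 : LaurentSeries ℚ), mul_assoc, hS, hS]
    ring
  rw [sum_congr rfl hterm, ← mul_sum, sum_antidiagonal_pow_sub_pow_mul_pow_sub_pow huv, hu, hv]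

/-- for every positive integer `k`, as Laurent series in `w`,
`∑_{k₁+k₂=k} S(w k₁) S(w k₂) k₁ k₂
  = (1/w²)·( k (e^{wk/2} + e^{-wk/2}) − ((e^{w/2}+e^{-w/2})/(e^{w/2}−e^{-w/2}))·(e^{wk/2} − e^{-wk/2}) )`. -/
theorem Sser_convolution (k : ℕ) (hk : 1 ≤ k) :
    ∑ pq ∈ Finset.HasAntidiagonal.antidiagonal k,
        toL (Sser pq.1) * toL (Sser pq.2) * ((pq.1 : LaurentSeries ℚ)) * ((pq.2 : LaurentSeries ℚ)) =
      (toL PowerSeries.X ^ 2)⁻¹ *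
        ((k : LaurentSeries ℚ) * (toL (expSeries (k / 2)) + toL (expSeries (-(k / 2)))) -
          (toL (expSeries (1 / 2)) + toL (expSeries (-(1 / 2)))) /
              (toL (expSeries (1 / 2)) - toL (expSeries (-(1 / 2)))) *
            (toL (expSeries (k / 2)) - toL (expSeries (-(k / 2))))) :=
  Sser_convolution_general k
end
end
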